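/- arXiv:1904.12598 — 3 statements merged into one kernel-verified Lean document; each statement's English description precedes it below -/
import Mathlib

section
/- Let X be a Banach space and ε ∈ (0,1). Assume that the closed unit ball of X contains a weakly null sequence (u_n)_{n=1}^∞ such that ‖u_n − u_m‖ ≥ 1 + ε for all n ≠ m. Then the closed unit ball of X contains a sequence (y_n)_{n=1}^∞ such that ‖y_n − y_m‖ ≥ √(1+ε) and ‖y_n + y_m‖ ≥ √(1+ε) for all n ≠ m. -/
open Filter Topology

/-!
Write `s = √(1 + ε)`, so that `u` is `s²`-separated. Suppose first `‖u n‖ > s² / 2` for all `n`.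
If some `u n₀` has `‖u n₀ + u m‖ < s` for infinitely many `m`, the vectors `(u n₀ + u m) / s` along
those `m` work: their differences are `(u m - u m') / s`, and their sums are long because a norming
functional of `u n₀` sees `2 ‖u n₀‖` plus two terms that are almost zero, `u` being weakly null.
Otherwise `‖u n + u m‖ ≥ s` for every `n` and all large `m`, and a subsequence of `u` itself works.
If instead `‖u n‖ ≤ s² / 2` on a tail, separation forces `‖u n‖ = s² / 2` there, and rescaling to
the unit sphere gives a `2`-separated sequence, to which the first case applies since `s² < 2`.
-/

def SymmSeparated {ι X : Type*} [SeminormedAddCommGroup X] (δ : ℝ) (y : ι → X) : Prop :=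
  Pairwise fun i j => δ ≤ ‖y i - y j‖ ∧ δ ≤ ‖y i + y j‖

theorem SymmSeparated.smul {ι X : Type*} [SeminormedAddCommGroup X] [NormedSpace ℝ X]
    {δ c : ℝ} {y : ι → X} (hy : SymmSeparated δ y) (hc : 0 ≤ c) :
    SymmSeparated (c * δ) (c • y) := fun i j hij => by
  simp only [Pi.smul_apply, ← smul_sub, ← smul_add, norm_smul, Real.norm_of_nonneg hc]
  exact ⟨mul_le_mul_of_nonneg_left (hy hij).1 hc, mul_le_mul_of_nonneg_left (hy hij).2 hc⟩

theorem norm_eq_of_two_mul_le_norm_sub {X : Type*} [SeminormedAddCommGroup X] {u : ℕ → X}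
    {r : ℝ} (hu_ball : ∀ n, ‖u n‖ ≤ r) (hsep : Pairwise fun n m => 2 * r ≤ ‖u n - u m‖) (n : ℕ) :
    ‖u n‖ = r := by
  have := (hsep (n.succ_ne_self).symm).trans (norm_sub_le _ _)
  linarith [hu_ball n, hu_ball (n + 1)]

section

variable {X : Type*} [NormedAddCommGroup X] [NormedSpace ℝ X] {u : ℕ → X} {s : ℝ}

theorem exists_symmSeparated_of_frequently_norm_add_lt
    (hu : ∀ f : X →L[ℝ] ℝ, Tendsto (fun n => f (u n)) atTop (𝓝 0))
    (hsep : Pairwise fun n m => s ^ 2 ≤ ‖u n - u m‖) {n₀ : ℕ} (hn₀ : s ^ 2 / 2 < ‖u n₀‖)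
    (hfreq : ∃ᶠ m in atTop, ‖u n₀ + u m‖ < s) :
    ∃ y : ℕ → X, (∀ n, ‖y n‖ ≤ 1) ∧ SymmSeparated s y := by
  have hs : 0 < s := by
    obtain ⟨m, hm⟩ := hfreq.exists
    exact (norm_nonneg _).trans_lt hm
  obtain ⟨f, hf, hfu⟩ := exists_dual_vector'' ℝ (u n₀)
  set η := ‖u n₀‖ - s ^ 2 / 2
  have hη : 0 < η := sub_pos.mpr hn₀
  obtain ⟨φ, hφ, hφ_norm, hφ_f⟩ : ∃ φ : ℕ → ℕ, StrictMono φ ∧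
      (∀ k, ‖u n₀ + u (φ k)‖ < s) ∧ ∀ k, -η < f (u (φ k)) := by
    have hf_tail := (hu f).eventually (lt_mem_nhds (neg_lt_zero.mpr hη))
    obtain ⟨φ, hφ, h⟩ := extraction_of_frequently_atTop (hfreq.and_eventually hf_tail)
    exact ⟨φ, hφ, fun k => (h k).1, fun k => (h k).2⟩
  have hv : SymmSeparated (s * s) fun k => u n₀ + u (φ k) := by
    intro k l hkl
    constructor
    · rw [add_sub_add_left_eq_sub, ← sq]
      exact hsep (hφ.injective.ne hkl)
    · calc s * s = 2 * ‖u n₀‖ - 2 * η := by ring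
        _ ≤ f (u n₀ + u (φ k) + (u n₀ + u (φ l))) := by
          simp only [map_add, hfu, RCLike.ofReal_real_eq_id, id]
          linarith [hφ_f k, hφ_f l]
        _ ≤ ‖f‖ * ‖u n₀ + u (φ k) + (u n₀ + u (φ l))‖ := (le_abs_self _).trans (f.le_opNorm _)
        _ ≤ _ := mul_le_of_le_one_left (norm_nonneg _) hf
  refine ⟨s⁻¹ • fun k => u n₀ + u (φ k), fun k => ?_, ?_⟩
  · rw [Pi.smul_apply, norm_smul, Real.norm_of_nonneg (inv_nonneg.mpr hs.le)]
    exact inv_mul_le_one_of_le₀ (hφ_norm k).le hs.le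
  · simpa [hs.ne'] using hv.smul (inv_nonneg.mpr hs.le)

theorem exists_symmSeparated_of_half_sq_lt_norm (hs : 1 ≤ s) (hu_ball : ∀ n, ‖u n‖ ≤ 1)
    (hu : ∀ f : X →L[ℝ] ℝ, Tendsto (fun n => f (u n)) atTop (𝓝 0))
    (hsep : Pairwise fun n m => s ^ 2 ≤ ‖u n - u m‖) (hnorm : ∀ n, s ^ 2 / 2 < ‖u n‖) :
    ∃ y : ℕ → X, (∀ n, ‖y n‖ ≤ 1) ∧ SymmSeparated s y := by
  by_cases h : ∃ n₀, ∃ᶠ m in atTop, ‖u n₀ + u m‖ < s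
  · obtain ⟨n₀, hfreq⟩ := h
    exact exists_symmSeparated_of_frequently_norm_add_lt hu hsep (hnorm n₀) hfreq
  push Not at h
  obtain ⟨φ, hφ, hφ_add, -⟩ := (hasAntitoneBasis_atTop (α := ℕ)).subbasis_with_rel h
  refine ⟨u ∘ φ, fun k => hu_ball _, fun k l hkl => ⟨?_, ?_⟩⟩
  · exact (le_self_pow₀ hs two_ne_zero).trans (hsep (hφ.injective.ne hkl))
  · rcases hkl.lt_or_gt with hlt | hgt
    · exact hφ_add hlt
    · rw [Function.comp_apply, add_comm]
      exact hφ_add hgt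

theorem exists_symmSeparated_of_norm_le_half_sq (hs : 1 ≤ s) (hs_two : s ^ 2 < 2)
    (hu : ∀ f : X →L[ℝ] ℝ, Tendsto (fun n => f (u n)) atTop (𝓝 0))
    (hsep : Pairwise fun n m => s ^ 2 ≤ ‖u n - u m‖) (hnorm : ∀ n, ‖u n‖ ≤ s ^ 2 / 2) :
    ∃ y : ℕ → X, (∀ n, ‖y n‖ ≤ 1) ∧ SymmSeparated s y := by
  set r := s ^ 2 / 2
  have hr : 0 < r := by positivity
  have hu_norm : ∀ n, ‖u n‖ = r :=
    norm_eq_of_two_mul_le_norm_sub hnorm (by simpa [r, mul_div_cancel₀] using hsep)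
  have hv_norm : ∀ n, ‖r⁻¹ • u n‖ = 1 := fun n => by
    rw [norm_smul, Real.norm_of_nonneg (inv_nonneg.mpr hr.le), hu_norm, inv_mul_cancel₀ hr.ne']
  refine exists_symmSeparated_of_half_sq_lt_norm (u := r⁻¹ • u) hs (fun n => (hv_norm n).le)
    (fun f => by simpa using (hu f).const_mul r⁻¹) (fun n m hnm => ?_) (fun n => ?_)
  · show s ^ 2 ≤ ‖r⁻¹ • u n - r⁻¹ • u m‖
    rw [← smul_sub, norm_smul, Real.norm_of_nonneg (inv_nonneg.mpr hr.le)]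
    calc s ^ 2 ≤ r⁻¹ * s ^ 2 := by
          rw [show r⁻¹ * s ^ 2 = 2 by rw [inv_mul_eq_iff_eq_mul₀ hr.ne']; ring]
          exact hs_two.le
      _ ≤ r⁻¹ * ‖u n - u m‖ := mul_le_mul_of_nonneg_left (hsep hnm) (inv_nonneg.mpr hr.le)
  · rw [Pi.smul_apply, hv_norm]
    linarith

end

theorem sym_sep_of_weakly_null_sep_general (X : Type*) [NormedAddCommGroup X] [NormedSpace ℝ X]
    (ε : ℝ) (hε : ε ∈ Set.Ioo (0 : ℝ) 1) (u : ℕ → X)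
    (hu_ball : ∀ n, ‖u n‖ ≤ 1)
    (hu_weakly_null : ∀ f : X →L[ℝ] ℝ, Tendsto (fun n => f (u n)) atTop (nhds 0))
    (hu_sep : ∀ n m : ℕ, n ≠ m → 1 + ε ≤ ‖u n - u m‖) :
    ∃ y : ℕ → X, (∀ n, ‖y n‖ ≤ 1) ∧
      ∀ n m : ℕ, n ≠ m →
        Real.sqrt (1 + ε) ≤ ‖y n - y m‖ ∧ Real.sqrt (1 + ε) ≤ ‖y n + y m‖ := by
  obtain ⟨hε₀, hε₁⟩ := hε
  set s := Real.sqrt (1 + ε)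
  have hs : 1 ≤ s := Real.one_le_sqrt.mpr (by linarith)
  have hs_sq : s ^ 2 = 1 + ε := Real.sq_sqrt (by linarith)
  rw [← hs_sq] at hu_sep
  by_cases h : ∃ᶠ n in atTop, s ^ 2 / 2 < ‖u n‖
  · obtain ⟨φ, hφ, hφ_norm⟩ := extraction_of_frequently_atTop h
    exact exists_symmSeparated_of_half_sq_lt_norm hs (fun n => hu_ball _)
      (fun f => (hu_weakly_null f).comp hφ.tendsto_atTop)
      (fun n m hnm => hu_sep _ _ (hφ.injective.ne hnm)) hφ_norm
  · obtain ⟨N, hN⟩ := eventually_atTop.mp (not_frequently.mp h)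
    exact exists_symmSeparated_of_norm_le_half_sq hs (by linarith)
      (fun f => (hu_weakly_null f).comp (tendsto_add_atTop_nat N))
      (fun n m hnm => hu_sep _ _ (by omega)) (fun n => not_lt.mp (hN _ (by omega)))

/-- **Proposition 2.1.** If the unit ball of a Banach space `X` contains a weakly null
`(1+ε)`-separated sequence, with `ε ∈ (0,1)`, then it also contains a symmetrically
`√(1+ε)`-separated sequence. -/
theorem sym_sep_of_weakly_null_sep (X : Type*) [NormedAddCommGroup X] [NormedSpace ℝ X]
    [CompleteSpace X] (ε : ℝ) (hε : ε ∈ Set.Ioo (0 : ℝ) 1) (u : ℕ → X)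
    (hu_ball : ∀ n, ‖u n‖ ≤ 1)
    (hu_weakly_null : ∀ f : X →L[ℝ] ℝ, Tendsto (fun n => f (u n)) atTop (nhds 0))
    (hu_sep : ∀ n m : ℕ, n ≠ m → 1 + ε ≤ ‖u n - u m‖) :
    ∃ y : ℕ → X, (∀ n, ‖y n‖ ≤ 1) ∧
      ∀ n m : ℕ, n ≠ m →
        Real.sqrt (1 + ε) ≤ ‖y n - y m‖ ∧ Real.sqrt (1 + ε) ≤ ‖y n + y m‖ :=
  sym_sep_of_weakly_null_sep_general X ε hε u hu_ball hu_weakly_null hu_sep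
end

section
/- For every Banach space X one has K^s(X) ≥ √(γ₀(X)), where K^s(X) := sup{σ ≥ 0 : the closed unit ball of X contains a sequence (x_n) with ‖x_n − x_m‖ ≥ σ and ‖x_n + x_m‖ ≥ σ for all n ≠ m} and γ₀(X) := sup{r ≥ 0 : the closed unit ball of X contains a weakly null sequence (x_n) with ‖x_n − x_m‖ ≥ r for all n ≠ m} (with the convention that each supremum is 0 if the corresponding set is empty). -/
open Filter Topology

/-- The symmetric Kottman constant `K^s(X)`. -/
noncomputable def symKottmanConst (X : Type*) [NormedAddCommGroup X] [NormedSpace ℝ X] : ℝ :=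
  sSup {σ : ℝ | 0 ≤ σ ∧ ∃ x : ℕ → X, (∀ n, ‖x n‖ ≤ 1) ∧
    ∀ n m : ℕ, n ≠ m → σ ≤ ‖x n - x m‖ ∧ σ ≤ ‖x n + x m‖}

/-- The constant `γ₀(X)` of Dronka, Olszowy and Rybarska-Rusinek: the supremum of all
`r ≥ 0` such that the closed unit ball of `X` contains a weakly null `r`-separated
sequence. (Recall that `sSup ∅ = 0` in `ℝ` by convention.) -/
noncomputable def gammaZero (X : Type*) [NormedAddCommGroup X] [NormedSpace ℝ X] : ℝ :=
  sSup {r : ℝ | 0 ≤ r ∧ ∃ x : ℕ → X, (∀ n, ‖x n‖ ≤ 1) ∧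
    (∀ f : X →L[ℝ] ℝ, Tendsto (fun n => f (x n)) atTop (nhds 0)) ∧
    ∀ n m : ℕ, n ≠ m → r ≤ ‖x n - x m‖}

/-!
Let `x` be a weakly null `r`-separated sequence in the unit ball, `r > 0`, and `t = √r`; after
dropping an initial segment, `‖x n‖ ≥ r / 2` for all `n`. If `r ≤ 1`, the normalized `x n` are
weakly null unit vectors; functionals norming them, together with a diagonal extraction, give
symmetrically `(1 - ε)`-separated subsequences. If `r > 1` and `‖x c + x p‖ ≤ t` for some `c` and
infinitely many `p`, the vectors `(x c + x p) / t` lie in the unit ball, are `r / t = t`-separated,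
and their sums have norm at least about `2 ‖x c‖ / t ≥ t` because `x` is weakly null. Otherwise,
for every `m`, `‖x m + x p‖ > t` for all large `p`, and a diagonal subsequence of `x` itself is
symmetrically `t`-separated, since `t ≤ r`.
-/

theorem exists_strictMono_forall_lt_of_eventually {R : ℕ → ℕ → Prop}
    (h : ∀ m, ∀ᶠ p in atTop, R m p) :
    ∃ φ : ℕ → ℕ, StrictMono φ ∧ ∀ k l, k < l → R (φ k) (φ l) := by
  have hnext : ∀ n, ∃ p, n < p ∧ ∀ m ≤ n, R m p := fun n =>
    ((eventually_gt_atTop n).and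
      ((eventually_all_finite (Set.finite_Iic n)).2 fun m _ => h m)).exists
  choose g hg_gt hg_rel using hnext
  set φ : ℕ → ℕ := fun k => g^[k] 0
  have hstep : ∀ k, φ (k + 1) = g (φ k) := fun k => Function.iterate_succ_apply' g k 0
  have hφ : StrictMono φ := strictMono_nat_of_lt_succ fun k => hstep k ▸ hg_gt _
  refine ⟨φ, hφ, fun k l hkl => ?_⟩
  obtain ⟨l, rfl⟩ := Nat.exists_eq_add_of_lt hkl
  rw [hstep]
  exact hg_rel _ _ (hφ.monotone (Nat.le_add_right k l))

theorem eventually_half_le_norm_of_pairwise {E : Type*} [SeminormedAddCommGroup E] {x : ℕ → E}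
    {r : ℝ} (hsep : Pairwise fun n m => r ≤ ‖x n - x m‖) : ∀ᶠ n in atTop, r / 2 ≤ ‖x n‖ := by
  have hsmall : {n | ‖x n‖ < r / 2}.Subsingleton := by
    intro a ha b hb
    by_contra hab
    have := hsep hab
    have := norm_sub_le (x a) (x b)
    simp only [Set.mem_ofPred_eq] at ha hb
    linarith
  rw [← Nat.cofinite_eq_atTop]
  filter_upwards [hsmall.finite.eventually_cofinite_notMem] with n hn
  simpa using hn

section

variable {X : Type*} [NormedAddCommGroup X] [NormedSpace ℝ X]

theorem exists_norming_functional (v : X) : ∃ F : X →L[ℝ] ℝ, F v = ‖v‖ ∧ ∀ u, F u ≤ ‖u‖ := by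
  obtain ⟨F, hF, hFv⟩ := exists_dual_vector'' ℝ v
  refine ⟨F, hFv, fun u => (le_abs_self _).trans ?_⟩
  simpa using F.le_of_opNorm_le hF u

def IsWeaklyNull (x : ℕ → X) : Prop :=
  ∀ f : X →L[ℝ] ℝ, Tendsto (fun n => f (x n)) atTop (𝓝 0)

namespace IsWeaklyNull

variable {x : ℕ → X}

theorem neg (hx : IsWeaklyNull x) : IsWeaklyNull (-x) := fun f => by
  simpa using (hx f).neg

theorem comp (hx : IsWeaklyNull x) {φ : ℕ → ℕ} (hφ : Tendsto φ atTop atTop) :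
    IsWeaklyNull (x ∘ φ) :=
  fun f => (hx f).comp hφ

theorem smul (hx : IsWeaklyNull x) {c : ℕ → ℝ} (hc : IsBoundedUnder (· ≤ ·) atTop (norm ∘ c)) :
    IsWeaklyNull fun n => c n • x n := fun f => by
  simpa using isBoundedUnder_le_mul_tendsto_zero hc (hx f)

theorem inv_norm_smul (hx : IsWeaklyNull x) {a : ℝ} (ha : 0 < a) (hlow : ∀ n, a ≤ ‖x n‖) :
    IsWeaklyNull fun n => ‖x n‖⁻¹ • x n :=
  hx.smul <| isBoundedUnder_of ⟨a⁻¹, fun n => by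
    simpa using inv_anti₀ ha (hlow n)⟩

/-- Weak lower semicontinuity of the norm. -/
theorem eventually_norm_sub_lt_norm_add (hx : IsWeaklyNull x) (v : X) {ε : ℝ} (hε : 0 < ε) :
    ∀ᶠ p in atTop, ‖v‖ - ε < ‖v + x p‖ := by
  obtain ⟨F, hFv, hF⟩ := exists_norming_functional v
  filter_upwards [(hx F).eventually (lt_mem_nhds (neg_lt_zero.2 hε))] with p hp
  calc ‖v‖ - ε < F (v + x p) := by rw [map_add, hFv]; linarith
    _ ≤ ‖v + x p‖ := hF _

end IsWeaklyNull

theorem le_symKottmanConst {σ : ℝ} {y : ℕ → X} (hy : ∀ n, ‖y n‖ ≤ 1)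
    (hsep : Pairwise fun n m => σ ≤ ‖y n - y m‖ ∧ σ ≤ ‖y n + y m‖) :
    σ ≤ symKottmanConst X := by
  have hbdd : BddAbove {σ : ℝ | 0 ≤ σ ∧ ∃ x : ℕ → X, (∀ n, ‖x n‖ ≤ 1) ∧
      ∀ n m : ℕ, n ≠ m → σ ≤ ‖x n - x m‖ ∧ σ ≤ ‖x n + x m‖} := by
    refine ⟨2, fun τ ⟨_, z, hz, hzsep⟩ => ?_⟩
    have := (hzsep 0 1 zero_ne_one).1
    have := norm_sub_le (z 0) (z 1)
    linarith [hz 0, hz 1]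
  refine (le_max_left σ 0).trans (le_csSup hbdd ⟨le_max_right σ 0, y, hy, fun n m hnm => ?_⟩)
  exact ⟨max_le (hsep hnm).1 (norm_nonneg _), max_le (hsep hnm).2 (norm_nonneg _)⟩

theorem symKottmanConst_nonneg : 0 ≤ symKottmanConst X :=
  le_symKottmanConst (y := 0) (by simp) fun _ _ _ => by simp

theorem le_symKottmanConst_of_eventually {σ : ℝ} {x : ℕ → X} (hx : ∀ n, ‖x n‖ ≤ 1)
    (h : ∀ m, ∀ᶠ p in atTop, σ ≤ ‖x m - x p‖ ∧ σ ≤ ‖x m + x p‖) :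
    σ ≤ symKottmanConst X := by
  obtain ⟨φ, -, hφ⟩ := exists_strictMono_forall_lt_of_eventually h
  refine le_symKottmanConst (y := x ∘ φ) (fun n => hx _) fun k l hkl => ?_
  rcases hkl.lt_or_gt with hkl | hkl
  · exact hφ k l hkl
  · simpa only [Function.comp_apply, norm_sub_rev, add_comm] using hφ l k hkl

theorem one_le_symKottmanConst {w : ℕ → X} (hw1 : ∀ n, ‖w n‖ = 1) (hw : IsWeaklyNull w) :
    1 ≤ symKottmanConst X := by
  refine le_of_forall_sub_le fun ε hε =>
    le_symKottmanConst_of_eventually (fun n => (hw1 n).le) fun m => ?_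
  filter_upwards [hw.neg.eventually_norm_sub_lt_norm_add (w m) hε,
    hw.eventually_norm_sub_lt_norm_add (w m) hε] with p hsub hadd
  rw [hw1] at hsub hadd
  exact ⟨by simpa [← sub_eq_add_neg] using hsub.le, hadd.le⟩

theorem sqrt_sub_le_symKottmanConst_of_frequently {x : ℕ → X} {r ε : ℝ} (hr : 0 < r)
    (hε : 0 < ε) (hx : IsWeaklyNull x) (hsep : Pairwise fun n m => r ≤ ‖x n - x m‖) {c : ℕ}
    (hc : r / 2 ≤ ‖x c‖) (hfreq : ∃ᶠ p in atTop, ‖x c + x p‖ ≤ √r) :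
    √r - ε ≤ symKottmanConst X := by
  set t := √r
  have ht : 0 < t := Real.sqrt_pos.2 hr
  have htt : t * t = r := Real.mul_self_sqrt hr.le
  obtain ⟨F, hFc, hF⟩ := exists_norming_functional (x c)
  have hsmall : ∀ᶠ p in atTop, -(ε * t / 2) < F (x p) :=
    (hx F).eventually (lt_mem_nhds (by linarith [mul_pos hε ht]))
  obtain ⟨φ, hφ, hφS⟩ := extraction_of_frequently_atTop (hfreq.and_eventually hsmall)
  have hnorm : ∀ v : X, ‖t⁻¹ • v‖ = ‖v‖ / t := fun v => by
    rw [norm_smul, Real.norm_of_nonneg (inv_nonneg.2 ht.le), inv_mul_eq_div]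
  refine le_symKottmanConst (y := fun k => t⁻¹ • (x c + x (φ k)))
    (fun k => ?_) fun k l hkl => ⟨?_, ?_⟩
  · rw [hnorm, div_le_one ht]
    exact (hφS k).1
  · rw [← smul_sub, add_sub_add_left_eq_sub, hnorm, le_div_iff₀ ht]
    nlinarith [hsep (hφ.injective.ne hkl)]
  · rw [← smul_add, hnorm, le_div_iff₀ ht]
    have hFsum : F ((x c + x (φ k)) + (x c + x (φ l))) =
        2 * ‖x c‖ + F (x (φ k)) + F (x (φ l)) := by
      simp only [map_add, hFc]
      ring
    nlinarith [hF ((x c + x (φ k)) + (x c + x (φ l))), (hφS k).2, (hφS l).2]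

theorem sqrt_le_symKottmanConst_of_half_le_norm {x : ℕ → X} {r : ℝ} (hr : 0 < r)
    (hx1 : ∀ n, ‖x n‖ ≤ 1) (hx : IsWeaklyNull x) (hsep : Pairwise fun n m => r ≤ ‖x n - x m‖)
    (hlow : ∀ n, r / 2 ≤ ‖x n‖) : √r ≤ symKottmanConst X := by
  have hr2 : 0 < r / 2 := half_pos hr
  rcases le_or_gt r 1 with hr1 | hr1
  · refine (Real.sqrt_le_one.2 hr1).trans (one_le_symKottmanConst (fun n => ?_)
      (hx.inv_norm_smul hr2 hlow))
    simpa using norm_smul_inv_norm (𝕜 := ℝ) (norm_pos_iff.1 (hr2.trans_le (hlow n)))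
  by_cases hfreq : ∃ c, ∃ᶠ p in atTop, ‖x c + x p‖ ≤ √r
  · obtain ⟨c, hc⟩ := hfreq
    exact le_of_forall_sub_le fun ε hε =>
      sqrt_sub_le_symKottmanConst_of_frequently hr hε hx hsep (hlow c) hc
  · push Not at hfreq
    refine le_symKottmanConst_of_eventually hx1 fun m => ?_
    filter_upwards [eventually_ne_atTop m, hfreq m] with p hpm hp
    exact ⟨(Real.sqrt_le_self_iff.2 (Or.inr hr1.le)).trans (hsep hpm.symm), hp.le⟩

theorem sqrt_le_symKottmanConst {x : ℕ → X} {r : ℝ} (hr : 0 ≤ r) (hx1 : ∀ n, ‖x n‖ ≤ 1)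
    (hx : IsWeaklyNull x) (hsep : Pairwise fun n m => r ≤ ‖x n - x m‖) :
    √r ≤ symKottmanConst X := by
  rcases hr.eq_or_lt with rfl | hr
  · simpa using symKottmanConst_nonneg
  obtain ⟨N, hN⟩ := eventually_atTop.1 (eventually_half_le_norm_of_pairwise hsep)
  exact sqrt_le_symKottmanConst_of_half_le_norm hr (fun n => hx1 _)
    (hx.comp (tendsto_add_atTop_nat N)) (fun n m hnm => hsep ((add_left_injective N).ne hnm))
    fun n => hN _ (Nat.le_add_left N n)

end

theorem symKottman_ge_sqrt_gammaZero_general (X : Type*) [NormedAddCommGroup X] [NormedSpace ℝ X] :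
    Real.sqrt (gammaZero X) ≤ symKottmanConst X := by
  rw [Real.sqrt_le_left symKottmanConst_nonneg]
  refine Real.sSup_le (fun r ⟨hr, x, hx1, hx, hsep⟩ => ?_) (sq_nonneg _)
  exact (Real.sqrt_le_left symKottmanConst_nonneg).1 (sqrt_le_symKottmanConst hr hx1 hx hsep)

/-- **Inequality (2.1).** `K^s(X) ≥ √(γ₀(X))` for every Banach space `X`. -/
theorem symKottman_ge_sqrt_gammaZero (X : Type*) [NormedAddCommGroup X] [NormedSpace ℝ X]
    [CompleteSpace X] :
    Real.sqrt (gammaZero X) ≤ symKottmanConst X :=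
  symKottman_ge_sqrt_gammaZero_general X
end

section
/- Let X be a reflexive Banach space with the non-strict Opial property admitting a Schauder basis (e_j)_{j=1}^∞ that is λ-asymptotic c₀, i.e., for every normalized block basis (x_j)_{j=1}^∞ of (e_j) and every n ∈ ℕ there exist indices j_1 < j_2 < ... < j_n such that max_{1≤i≤n}|a_i| ≤ ‖Σ_{i=1}^n a_i x_{j_i}‖ ≤ λ · max_{1≤i≤n}|a_i| for all scalars a_1, ..., a_n. Then K(X) ≤ λ, where K(X) := sup{σ ≥ 0 : the closed unit ball of X contains a sequence (x_n) with ‖x_n − x_m‖ ≥ σ for all n ≠ m}. -/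
open Filter Topology

/-- The Kottman constant `K(X)`. -/
noncomputable def kottmanConst (X : Type*) [NormedAddCommGroup X] [NormedSpace ℝ X] : ℝ :=
  sSup {σ : ℝ | 0 ≤ σ ∧ ∃ x : ℕ → X, (∀ n, ‖x n‖ ≤ 1) ∧
    ∀ n m : ℕ, n ≠ m → σ ≤ ‖x n - x m‖}

/-- `X` has the non-strict Opial property. -/
def NonStrictOpial (X : Type*) [NormedAddCommGroup X] [NormedSpace ℝ X] : Prop :=
  ∀ (x : ℕ → X) (x₀ : X),
    (∀ f : X →L[ℝ] ℝ, Tendsto (fun n => f (x n)) atTop (nhds (f x₀))) →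
    ∀ y : X, liminf (fun n => ‖x n - x₀‖) atTop ≤ liminf (fun n => ‖x n - y‖) atTop

/-- `e` is a Schauder basis of `X`: every `x ∈ X` has a unique expansion
`x = Σ_{j} a j • e j` with norm-convergent partial sums. -/
def IsSchauderBasis {X : Type*} [NormedAddCommGroup X] [NormedSpace ℝ X] (e : ℕ → X) : Prop :=
  ∀ x : X, ∃! a : ℕ → ℝ,
    Tendsto (fun N => ∑ j ∈ Finset.range N, a j • e j) atTop (nhds x)

/-- `x` is a normalised block basis of `e`: each `x j` is a (nonzero, norm-one) linear
combination of the `e i` with `i` in a finite set `F j`, and `F 0 < F 1 < ⋯`. -/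
def IsNormalizedBlockBasis {X : Type*} [NormedAddCommGroup X] [NormedSpace ℝ X]
    (e x : ℕ → X) : Prop :=
  ∃ (F : ℕ → Finset ℕ) (a : ℕ → ℝ),
    (∀ j, (F j).Nonempty) ∧
    (∀ j, ∀ i ∈ F j, ∀ i' ∈ F (j + 1), i < i') ∧
    (∀ j, x j = ∑ i ∈ F j, a i • e i) ∧
    (∀ j, ‖x j‖ = 1)

/-- The basis `e` is `λ`-asymptotic `c₀`: every normalised block basis admits, for each
`n`, a finite subsequence of length `n` which is `λ`-equivalent to the canonical basis
of `ℓ∞ⁿ`. -/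
def IsAsymptoticC0 {X : Type*} [NormedAddCommGroup X] [NormedSpace ℝ X]
    (e : ℕ → X) (lam : ℝ) : Prop :=
  ∀ x : ℕ → X, IsNormalizedBlockBasis e x →
    ∀ n : ℕ, ∃ j : Fin n → ℕ, StrictMono j ∧
      ∀ a : Fin n → ℝ,
        (∀ i, |a i| ≤ ‖∑ i, a i • x (j i)‖) ∧
        ‖∑ i, a i • x (j i)‖ ≤ lam * ⨆ i, |a i|

/-!
A `σ`-separated sequence `(xₙ)` in the unit ball has, by reflexivity, a subsequence whose
coordinates converge to those of some `x₀` and with `‖xₙ - x₀‖ → d`. A gliding hump turns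
`xₙ - x₀` into a perturbation of `d • uₙ` for a normalized block basis `(uₙ)`. Asymptotic `c₀`
makes block bases weakly null, so `xₙ ⇀ x₀` and Opial's condition against `y = 0` gives `d ≤ 1`;
it also provides pairs of blocks, arbitrarily far out, with `‖uᵢ - uⱼ‖ ≤ λ`, whence
`σ ≤ d λ ≤ λ`. The coordinate functionals are continuous by the open mapping theorem, applied to
the Banach space of sequences of tails of expansions.
-/

open ZeroAtInfty BoundedContinuousFunction Finset

section

variable {X : Type*} [NormedAddCommGroup X] [NormedSpace ℝ X] {e : ℕ → X}

namespace IsSchauderBasis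

noncomputable def coeff (hb : IsSchauderBasis e) (x : X) : ℕ → ℝ := (hb x).exists.choose

theorem tendsto_sum_coeff (hb : IsSchauderBasis e) (x : X) :
    Tendsto (fun N => ∑ j ∈ range N, hb.coeff x j • e j) atTop (𝓝 x) :=
  (hb x).exists.choose_spec

theorem coeff_eq {hb : IsSchauderBasis e} {x : X} {a : ℕ → ℝ}
    (ha : Tendsto (fun N => ∑ j ∈ range N, a j • e j) atTop (𝓝 x)) : hb.coeff x = a :=
  (hb x).unique (hb.tendsto_sum_coeff x) ha

theorem coeff_basis (hb : IsSchauderBasis e) (j : ℕ) : hb.coeff (e j) = Pi.single j 1 := by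
  refine coeff_eq (tendsto_const_nhds.congr' (eventually_gt_atTop j |>.mono fun N hN => ?_))
  simp [Pi.single_apply, hN]

theorem coeff_zero (hb : IsSchauderBasis e) : hb.coeff 0 = 0 :=
  coeff_eq (by simp)

theorem ne_zero (hb : IsSchauderBasis e) (j : ℕ) : e j ≠ 0 := fun h => by
  simpa [h, hb.coeff_zero] using congrFun (hb.coeff_basis j) j

end IsSchauderBasis

def evalC₀ (N : ℕ) : C₀(ℕ, X) →L[ℝ] X where
  toFun s := s N
  map_add' _ _ := rfl
  map_smul' _ _ := rfl
  cont := (continuous_eval_const (F := ℕ →ᵇ X) N).comp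
    ZeroAtInftyContinuousMap.isometry_toBCF.continuous

@[simp]
theorem evalC₀_apply (N : ℕ) (s : C₀(ℕ, X)) : evalC₀ N s = s N := rfl

variable (e) in
/-- Null sequences whose increments `s N - s (N + 1)` lie on the lines `ℝ ∙ e N`: exactly the
sequences of tails `x - ∑_{j<N} a_j e_j` of expansions (`IsSchauderBasis.eq_tails_of_mem`). -/
def tailSpace : Submodule ℝ C₀(ℕ, X) where
  carrier := {s | ∀ N, s N - s (N + 1) ∈ ℝ ∙ e N}
  add_mem' {s t} hs ht N := by
    simpa [add_sub_add_comm] using add_mem (hs N) (ht N)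
  zero_mem' N := by simp
  smul_mem' c s hs N := by simpa [← smul_sub] using Submodule.smul_mem _ c (hs N)

theorem isClosed_tailSpace : IsClosed (tailSpace e : Set C₀(ℕ, X)) := by
  have : (tailSpace e : Set C₀(ℕ, X)) =
      ⋂ N, (evalC₀ N - evalC₀ (N + 1) : C₀(ℕ, X) →L[ℝ] X) ⁻¹' (ℝ ∙ e N : Submodule ℝ X) := by
    ext s; simp [tailSpace]
  rw [this]
  exact isClosed_iInter fun N =>
    (Submodule.closed_of_finiteDimensional _).preimage (ContinuousLinearMap.continuous _)

namespace IsSchauderBasis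

variable (hb : IsSchauderBasis e)

noncomputable def tails (x : X) : C₀(ℕ, X) where
  toFun N := x - ∑ j ∈ range N, hb.coeff x j • e j
  continuous_toFun := continuous_of_discreteTopology
  zero_at_infty' := by
    rw [cocompact_eq_cofinite, Nat.cofinite_eq_atTop]
    simpa using (tendsto_const_nhds (x := x)).sub (hb.tendsto_sum_coeff x)

@[simp]
theorem tails_apply (x : X) (N : ℕ) : hb.tails x N = x - ∑ j ∈ range N, hb.coeff x j • e j := rfl

theorem tails_mem (x : X) : hb.tails x ∈ tailSpace e := fun N =>
  Submodule.mem_span_singleton.2 ⟨hb.coeff x N, by simp [sum_range_succ]⟩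

theorem eq_tails_of_mem {s : C₀(ℕ, X)} (hs : s ∈ tailSpace e) : s = hb.tails (s 0) := by
  choose c hc using fun N => Submodule.mem_span_singleton.1 (hs N)
  have hsum (N : ℕ) : ∑ j ∈ range N, c j • e j = s 0 - s N := by
    simp only [hc, sum_range_sub']
  have hlim : Tendsto (fun N => s N) atTop (𝓝 0) := by
    simpa [cocompact_eq_cofinite, Nat.cofinite_eq_atTop] using s.zero_at_infty'
  have hcoeff : hb.coeff (s 0) = c :=
    coeff_eq (by simpa [hsum] using tendsto_const_nhds.sub hlim)
  ext N
  simp [hcoeff, hsum]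

variable [CompleteSpace X]

noncomputable def tailEquiv : tailSpace e ≃L[ℝ] X :=
  haveI : CompleteSpace (tailSpace e) := isClosed_tailSpace.completeSpace_coe
  .ofBijective ((evalC₀ 0).comp (tailSpace e).subtypeL)
    (LinearMap.ker_eq_bot.2 fun s t hst => Subtype.ext <| by
      rw [hb.eq_tails_of_mem s.2, hb.eq_tails_of_mem t.2]
      exact congrArg hb.tails hst)
    (LinearMap.range_eq_top.2 fun x => ⟨⟨hb.tails x, hb.tails_mem x⟩, by simp⟩)

theorem coe_tailEquiv_symm (x : X) : (hb.tailEquiv.symm x : C₀(ℕ, X)) = hb.tails x := by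
  rw [hb.eq_tails_of_mem (hb.tailEquiv.symm x).2]
  congr
  exact hb.tailEquiv.apply_symm_apply x

theorem exists_coord (j : ℕ) : ∃ f : StrongDual ℝ X, ∀ x, f x = hb.coeff x j := by
  obtain ⟨g, hg⟩ := SeparatingDual.exists_eq_one (R := ℝ) (hb.ne_zero j)
  refine ⟨g ∘L (evalC₀ j - evalC₀ (j + 1)) ∘L (tailSpace e).subtypeL ∘L
    (hb.tailEquiv.symm : X →L[ℝ] tailSpace e), fun x => ?_⟩
  simp [coe_tailEquiv_symm, sum_range_succ, hg]

end IsSchauderBasis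

theorem IsSchauderBasis.exists_schauderBasis [CompleteSpace X] (hb : IsSchauderBasis e) :
    ∃ b : SchauderBasis ℝ X, ⇑b = e := by
  choose f hf using hb.exists_coord
  refine ⟨⟨e, f, fun i j => by simp [hf, hb.coeff_basis, Pi.single_apply], fun x => ?_⟩, rfl⟩
  rw [HasSum, SummationFilter.conditional_filter_eq_map_range, tendsto_map'_iff]
  simpa [Function.comp_def, hf] using hb.tendsto_sum_coeff x

theorem Ultrafilter.exists_tendsto_of_abs_le {ι : Type*} (U : Ultrafilter ι) {u : ι → ℝ} {C : ℝ}
    (hu : ∀ i, |u i| ≤ C) : ∃ c, Tendsto u U (𝓝 c) := by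
  obtain ⟨c, -, hc⟩ := (isCompact_Icc (a := -C) (b := C)).ultrafilter_le_nhds (U.map u)
    (le_principal_iff.2 <| mem_map.2 <| univ_mem' fun i => abs_le.1 (hu i))
  exact ⟨c, hc⟩

theorem exists_weak_tendsto_ultrafilter
    (hrefl : Function.Surjective (NormedSpace.inclusionInDoubleDual ℝ X)) {ι : Type*}
    (U : Ultrafilter ι) {x : ι → X} {C : ℝ} (hx : ∀ i, ‖x i‖ ≤ C) :
    ∃ x₀ : X, ∀ f : StrongDual ℝ X, Tendsto (fun i => f (x i)) U (𝓝 (f x₀)) := by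
  have hbound (f : StrongDual ℝ X) (i : ι) : |f (x i)| ≤ ‖f‖ * C :=
    (f.le_opNorm _).trans (mul_le_mul_of_nonneg_left (hx i) (norm_nonneg f))
  choose φ hφ using fun f => U.exists_tendsto_of_abs_le (hbound f)
  let Φ : StrongDual ℝ X →ₗ[ℝ] ℝ :=
    { toFun := φ
      map_add' := fun f g => tendsto_nhds_unique (hφ (f + g)) (by simpa using (hφ f).add (hφ g))
      map_smul' := fun c f => tendsto_nhds_unique (hφ (c • f)) (by simpa using (hφ f).const_mul c) }
  obtain ⟨x₀, hx₀⟩ := hrefl <| Φ.mkContinuous C fun f => by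
    rw [mul_comm]
    exact le_of_tendsto (hφ f).abs (Eventually.of_forall (hbound f))
  refine ⟨x₀, fun f => ?_⟩
  convert hφ f using 2
  exact congrArg (fun φ => φ f) hx₀

theorem exists_subseq_tendsto_apply
    (hrefl : Function.Surjective (NormedSpace.inclusionInDoubleDual ℝ X))
    (g : ℕ → StrongDual ℝ X) {x : ℕ → X} {C : ℝ} (hx : ∀ n, ‖x n‖ ≤ C) :
    ∃ (x₀ : X) (d : ℝ) (ψ : ℕ → ℕ), StrictMono ψ ∧
      (∀ i, Tendsto (fun k => g i (x (ψ k))) atTop (𝓝 (g i x₀))) ∧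
      Tendsto (fun k => ‖x (ψ k) - x₀‖) atTop (𝓝 d) := by
  obtain ⟨U, hU⟩ := exists_ultrafilter_le (atTop : Filter ℕ)
  obtain ⟨x₀, hx₀⟩ := exists_weak_tendsto_ultrafilter hrefl U hx
  obtain ⟨d, hd⟩ := U.exists_tendsto_of_abs_le (u := fun n => ‖x n - x₀‖) (C := C + ‖x₀‖)
    fun n => by simpa using (norm_sub_le (x n) x₀).trans (by linarith [hx n])
  have hG : Tendsto (fun n => ((fun i => g i (x n)), ‖x n - x₀‖)) U
      (𝓝 ((fun i => g i x₀), d)) :=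
    (tendsto_pi_nhds.2 fun i => hx₀ (g i)).prodMk_nhds hd
  obtain ⟨ψ, hψ, hlim⟩ := (hG.mapClusterPt.mono hU).tendsto_subseq
  exact ⟨x₀, d, ψ, hψ, fun i => tendsto_pi_nhds.1 (hlim.fst_nhds) i, hlim.snd_nhds⟩

theorem lt_of_mem_blocks {F : ℕ → Finset ℕ} (hne : ∀ j, (F j).Nonempty)
    (hord : ∀ j, ∀ i ∈ F j, ∀ i' ∈ F (j + 1), i < i') {j j' : ℕ} (h : j < j') :
    ∀ i ∈ F j, ∀ i' ∈ F j', i < i' := by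
  induction h with
  | refl => exact hord j
  | step _ ih =>
    intro i hi i' hi'
    obtain ⟨k, hk⟩ := hne _
    exact (ih i hi k hk).trans (hord _ k hk i' hi')

theorem IsNormalizedBlockBasis.comp_strictMono {u : ℕ → X} (hu : IsNormalizedBlockBasis e u)
    {ρ : ℕ → ℕ} (hρ : StrictMono ρ) : IsNormalizedBlockBasis e (u ∘ ρ) := by
  obtain ⟨F, a, hne, hord, hrep, hnorm⟩ := hu
  exact ⟨F ∘ ρ, a, fun j => hne _, fun j => lt_of_mem_blocks hne hord (hρ j.lt_succ_self),
    fun j => hrep _, fun j => hnorm _⟩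

/-- Since the blocks are disjoint, coefficients given block by block glue to the single
coefficient sequence required by `IsNormalizedBlockBasis`. -/
theorem isNormalizedBlockBasis_of_blocks {u : ℕ → X} (F : ℕ → Finset ℕ) (c : ℕ → ℕ → ℝ)
    (hne : ∀ j, (F j).Nonempty) (hord : ∀ j, ∀ i ∈ F j, ∀ i' ∈ F (j + 1), i < i')
    (hrep : ∀ j, u j = ∑ i ∈ F j, c j i • e i) (hnorm : ∀ j, ‖u j‖ = 1) :
    IsNormalizedBlockBasis e u := by
  classical
  have hdisj {j j' i : ℕ} (hj : i ∈ F j) (hj' : i ∈ F j') : j = j' := by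
    by_contra hne'
    rcases Nat.lt_or_gt_of_ne hne' with h | h
    · exact lt_irrefl i (lt_of_mem_blocks hne hord h i hj i hj')
    · exact lt_irrefl i (lt_of_mem_blocks hne hord h i hj' i hj)
  refine ⟨F, fun i => if h : ∃ j, i ∈ F j then c h.choose i else 0, hne, hord, fun j => ?_, hnorm⟩
  rw [hrep]
  refine sum_congr rfl fun i hi => ?_
  have h : ∃ j, i ∈ F j := ⟨j, hi⟩
  simp only [dif_pos h, hdisj h.choose_spec hi]

theorem isNormalizedBlockBasis_normalize (he : ∀ j, e j ≠ 0) :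
    IsNormalizedBlockBasis e fun j => ‖e j‖⁻¹ • e j :=
  isNormalizedBlockBasis_of_blocks (fun j => {j}) (fun j _ => ‖e j‖⁻¹)
    (fun j => singleton_nonempty j) (fun j => by simp) (fun j => by simp)
    (fun j => norm_smul_inv_norm (he j))

theorem iSup_abs_eq_one {n : ℕ} [NeZero n] {a : Fin n → ℝ} (ha : ∀ i, |a i| = 1) :
    ⨆ i, |a i| = 1 := by
  simp [ha]

namespace IsAsymptoticC0

variable {u : ℕ → X} {lam : ℝ}

theorem one_le (h : IsAsymptoticC0 e lam) (he : ∀ j, e j ≠ 0) : 1 ≤ lam := by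
  obtain ⟨j, -, hj⟩ := h _ (isNormalizedBlockBasis_normalize he) 1
  obtain ⟨hlow, hup⟩ := hj 1
  simpa using (hlow 0).trans hup

theorem exists_norm_sub_le (h : IsAsymptoticC0 e lam) (hu : IsNormalizedBlockBasis e u) (M : ℕ) :
    ∃ i j, M ≤ i ∧ i < j ∧ ‖u i - u j‖ ≤ lam := by
  obtain ⟨j, hj, hsum⟩ := h _ (hu.comp_strictMono (strictMono_id.add_const M)) 2
  have hup := (hsum ![1, -1]).2
  rw [iSup_abs_eq_one fun i => by fin_cases i <;> simp, mul_one, Fin.sum_univ_two] at hup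
  refine ⟨j 0 + M, j 1 + M, by omega, by simpa using hj (show (0 : Fin 2) < 1 by decide), ?_⟩
  simpa [sub_eq_add_neg] using hup

/-- `n` terms with `|f| ≥ δ`, signed so that `f` adds up their absolute values, span a vector of
norm at most `λ`, whence `n δ ≤ ‖f‖ λ`. -/
theorem tendsto_apply_zero (h : IsAsymptoticC0 e lam) (hu : IsNormalizedBlockBasis e u)
    (f : StrongDual ℝ X) : Tendsto (fun m => f (u m)) atTop (𝓝 0) := by
  by_contra hcon
  obtain ⟨δ, hδ, hfreq⟩ : ∃ δ > 0, ∃ᶠ m in atTop, δ ≤ |f (u m)| := by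
    simp only [Metric.tendsto_atTop, Real.dist_eq, sub_zero, not_forall, not_exists,
      not_lt] at hcon
    obtain ⟨δ, hδ, h⟩ := hcon
    exact ⟨δ, hδ, frequently_atTop.2 fun N => by simpa using h N⟩
  obtain ⟨ρ, hρ, hρδ⟩ := extraction_of_frequently_atTop hfreq
  set n := ⌊‖f‖ * lam / δ⌋₊ + 1
  obtain ⟨j, -, hj⟩ := h _ (hu.comp_strictMono hρ) n
  let a : Fin n → ℝ := fun i => if 0 ≤ f (u (ρ (j i))) then 1 else -1
  have habs : ∀ i, |a i| = 1 := fun i => by by_cases h : 0 ≤ f (u (ρ (j i))) <;> simp [a, h]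
  have hsign : ∀ i, a i * f (u (ρ (j i))) = |f (u (ρ (j i)))| := fun i => by
    by_cases h : 0 ≤ f (u (ρ (j i)))
    · simp [a, h, abs_of_nonneg h]
    · simp [a, h, abs_of_neg (not_le.1 h)]
  have hup := (hj a).2
  rw [iSup_abs_eq_one habs, mul_one] at hup
  have hlow : n * δ ≤ ‖f‖ * lam :=
    calc n * δ = ∑ i : Fin n, δ := by simp
      _ ≤ ∑ i : Fin n, |f (u (ρ (j i)))| := sum_le_sum fun i _ => hρδ (j i)
      _ = f (∑ i, a i • (u ∘ ρ) (j i)) := by simp [map_sum, hsign]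
      _ ≤ ‖f‖ * ‖∑ i, a i • (u ∘ ρ) (j i)‖ := (le_abs_self _).trans (f.le_opNorm _)
      _ ≤ ‖f‖ * lam := mul_le_mul_of_nonneg_left hup (norm_nonneg f)
  have := Nat.lt_floor_add_one (‖f‖ * lam / δ)
  rw [div_lt_iff₀ hδ] at this
  push_cast [n] at hlow
  linarith

end IsAsymptoticC0

namespace SchauderBasis

variable (b : SchauderBasis ℝ X)

theorem tendsto_proj_of_tendsto_coord {y : ℕ → X}
    (hy : ∀ i, Tendsto (fun k => b.coord i (y k)) atTop (𝓝 0)) (n : ℕ) :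
    Tendsto (fun k => b.proj n (y k)) atTop (𝓝 0) := by
  simpa using tendsto_finsetSum (range n) fun i _ => (hy i).smul_const (b i)

/-- Gliding hump: `t (m + 1)` is chosen so that `y (t (m + 1))` is negligible on the first
`N (m + 1)` coordinates, and then `N (m + 2)` so that it is negligible beyond them. -/
theorem exists_tendsto_sub_proj_sub_proj {y : ℕ → X}
    (hy : ∀ i, Tendsto (fun k => b.coord i (y k)) atTop (𝓝 0)) :
    ∃ N t : ℕ → ℕ, StrictMono N ∧ StrictMono t ∧
      Tendsto (fun m => y (t m) - (b.proj (N (m + 1)) (y (t m)) - b.proj (N m) (y (t m))))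
        atTop (𝓝 0) := by
  have hε (k : ℕ) : (0 : ℝ) < 1 / (k + 1) := by positivity
  choose R hR using fun k => ((eventually_gt_atTop k).and
    ((b.tendsto_proj (y k)).eventually (Metric.ball_mem_nhds _ (hε k)))).exists
  choose g hg using fun k => ((eventually_gt_atTop (R k)).and
    ((b.tendsto_proj_of_tendsto_coord hy (R k)).eventually
      (Metric.ball_mem_nhds _ (hε k)))).exists
  set s : ℕ → ℕ := fun m => g^[m] 0
  have hs_succ (m : ℕ) : s (m + 1) = g (s m) := Function.iterate_succ_apply' g m 0
  have hs : StrictMono s := strictMono_nat_of_lt_succ fun m => by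
    rw [hs_succ]; exact (hR _).1.trans (hg _).1
  refine ⟨R ∘ s, s ∘ (· + 1), strictMono_nat_of_lt_succ fun m => ?_,
    hs.comp (strictMono_id.add_const 1), ?_⟩
  · simp only [Function.comp_apply, hs_succ]
    exact (hg _).1.trans (hR _).1
  refine squeeze_zero_norm (a := fun m => 2 * (1 / (s m + 1))) (fun m => ?_) ?_
  · simp only [Function.comp_apply, hs_succ]
    set k := s m
    have hk : k < g k := (hR k).1.trans (hg k).1
    calc ‖y (g k) - (b.proj (R (g k)) (y (g k)) - b.proj (R k) (y (g k)))‖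
        = ‖(y (g k) - b.proj (R (g k)) (y (g k))) + b.proj (R k) (y (g k))‖ := by
          congr 1; abel
      _ ≤ ‖y (g k) - b.proj (R (g k)) (y (g k))‖ + ‖b.proj (R k) (y (g k))‖ := norm_add_le _ _
      _ ≤ 1 / (g k + 1) + 1 / (k + 1) := by
          rw [← dist_eq_norm', ← dist_zero_right]
          exact add_le_add (hR _).2.le (hg k).2.le
      _ ≤ 2 * (1 / (k + 1)) := by
          have : (k : ℝ) ≤ g k := by exact_mod_cast hk.le
          rw [two_mul]; gcongr
  · simpa using (tendsto_one_div_add_atTop_nhds_zero_nat.comp hs.tendsto_atTop).const_mul (2 : ℝ)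

theorem isNormalizedBlockBasis_normalize_proj_sub {N : ℕ → ℕ} (hN : StrictMono N) {w z : ℕ → X}
    (hz : ∀ m, z m = b.proj (N (m + 1)) (w m) - b.proj (N m) (w m)) (hz₀ : ∀ m, z m ≠ 0) :
    IsNormalizedBlockBasis b fun m => ‖z m‖⁻¹ • z m := by
  refine isNormalizedBlockBasis_of_blocks (fun m => Ico (N m) (N (m + 1)))
    (fun m i => ‖z m‖⁻¹ * b.coord i (w m)) (fun m => nonempty_Ico.2 (hN m.lt_succ_self))
    (fun m i hi i' hi' => ?_) (fun m => ?_) (fun m => norm_smul_inv_norm (hz₀ m))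
  · exact (mem_Ico.1 hi).2.trans_le (mem_Ico.1 hi').1
  · rw [hz, proj_apply, proj_apply, ← sum_Ico_eq_sub _ (hN.monotone m.le_succ), smul_sum]
    simp only [smul_smul]

theorem exists_isNormalizedBlockBasis_tendsto {y : ℕ → X}
    (hy : ∀ i, Tendsto (fun k => b.coord i (y k)) atTop (𝓝 0)) {d : ℝ} (hd : 0 < d)
    (hyd : Tendsto (fun k => ‖y k‖) atTop (𝓝 d)) :
    ∃ t : ℕ → ℕ, StrictMono t ∧ ∃ u : ℕ → X, IsNormalizedBlockBasis b u ∧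
      Tendsto (fun m => y (t m) - d • u m) atTop (𝓝 0) := by
  obtain ⟨N, t, hN, ht, hyz⟩ := b.exists_tendsto_sub_proj_sub_proj hy
  set z : ℕ → X := fun m => b.proj (N (m + 1)) (y (t m)) - b.proj (N m) (y (t m))
  have hzd : Tendsto (fun m => ‖z m‖) atTop (𝓝 d) :=
    (hyd.comp ht.tendsto_atTop).congr_dist <| squeeze_zero (fun _ => dist_nonneg)
      (fun m => abs_norm_sub_norm_le _ _) (by simpa only [norm_zero] using hyz.norm)
  obtain ⟨M, hM⟩ := eventually_atTop.1 (hzd.eventually_const_lt hd)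
  have hz₀ (m : ℕ) : z (m + M) ≠ 0 := norm_pos_iff.1 (hM _ (by omega))
  refine ⟨t ∘ (· + M), ht.comp (strictMono_id.add_const M), fun m => ‖z (m + M)‖⁻¹ • z (m + M),
    b.isNormalizedBlockBasis_normalize_proj_sub (hN.comp (strictMono_id.add_const M))
      (w := fun m => y (t (m + M)))
      (fun m => by simp [z, add_right_comm]) hz₀, ?_⟩
  have hu (m : ℕ) : ‖‖z (m + M)‖⁻¹ • z (m + M)‖ = 1 := norm_smul_inv_norm (hz₀ m)
  have hsplit (m : ℕ) : y (t (m + M)) - d • ‖z (m + M)‖⁻¹ • z (m + M) =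
      (y (t (m + M)) - z (m + M)) + (‖z (m + M)‖ - d) • ‖z (m + M)‖⁻¹ • z (m + M) := by
    rw [sub_smul, smul_inv_smul₀ (norm_ne_zero_iff.2 (hz₀ m))]; abel
  refine squeeze_zero_norm (a := fun m => ‖y (t (m + M)) - z (m + M)‖ + |‖z (m + M)‖ - d|)
    (fun m => ?_) ?_
  · rw [Function.comp_apply, hsplit]
    refine (norm_add_le _ _).trans (le_of_eq ?_)
    rw [norm_smul, hu, mul_one, Real.norm_eq_abs]
  · have h1 : Tendsto (fun m => ‖y (t (m + M)) - z (m + M)‖) atTop (𝓝 0) := by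
      have := (hyz.comp (tendsto_add_atTop_nat M)).norm
      rwa [norm_zero] at this
    have h2 : Tendsto (fun m => |‖z (m + M)‖ - d|) atTop (𝓝 0) := by
      have := ((hzd.comp (tendsto_add_atTop_nat M)).sub_const d).abs
      rwa [sub_self, abs_zero] at this
    simpa only [add_zero] using h1.add h2

end SchauderBasis

theorem le_of_separated_of_tendsto_sub {E : Type*} [SeminormedAddCommGroup E] {w v : ℕ → E}
    {σ C : ℝ} (hsep : ∀ i j, i ≠ j → σ ≤ ‖w i - w j‖)
    (hwv : Tendsto (fun i => w i - v i) atTop (𝓝 0))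
    (hv : ∀ M, ∃ i j, M ≤ i ∧ i < j ∧ ‖v i - v j‖ ≤ C) : σ ≤ C := by
  refine le_of_forall_pos_lt_add fun ε hε => ?_
  obtain ⟨M, hM⟩ := eventually_atTop.1
    ((tendsto_zero_iff_norm_tendsto_zero.1 hwv).eventually (gt_mem_nhds (half_pos hε)))
  obtain ⟨i, j, hi, hij, hC⟩ := hv M
  calc σ ≤ ‖w i - w j‖ := hsep i j hij.ne
    _ = ‖(w i - v i) + (v i - v j) - (w j - v j)‖ := by congr 1; abel
    _ ≤ ‖w i - v i‖ + ‖v i - v j‖ + ‖w j - v j‖ := norm_sub_le_of_le (norm_add_le _ _) le_rfl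
    _ < ε / 2 + C + ε / 2 :=
      add_lt_add_of_le_of_lt (add_le_add (hM i hi).le hC) (hM j (hi.trans hij.le))
    _ = C + ε := by ring

theorem NonStrictOpial.le_of_tendsto (hopial : NonStrictOpial X) {x : ℕ → X} {x₀ : X} {d R : ℝ}
    (hweak : ∀ f : StrongDual ℝ X, Tendsto (fun n => f (x n)) atTop (𝓝 (f x₀)))
    (hd : Tendsto (fun n => ‖x n - x₀‖) atTop (𝓝 d)) (hR : ∀ n, ‖x n‖ ≤ R) : d ≤ R := by
  have h := hopial x x₀ hweak 0
  rw [hd.liminf_eq] at h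
  refine h.trans (liminf_le_of_frequently_le (Frequently.of_forall fun n => by simpa using hR n)
    (isBoundedUnder_of ⟨0, fun n => norm_nonneg _⟩))

theorem le_of_separated_of_isAsymptoticC0
    (hrefl : Function.Surjective (NormedSpace.inclusionInDoubleDual ℝ X))
    (hopial : NonStrictOpial X) (b : SchauderBasis ℝ X) {lam : ℝ} (hasym : IsAsymptoticC0 b lam)
    {σ : ℝ} {x : ℕ → X} (hx : ∀ n, ‖x n‖ ≤ 1) (hsep : ∀ n m, n ≠ m → σ ≤ ‖x n - x m‖) :
    σ ≤ lam := by
  have hlam : 1 ≤ lam := hasym.one_le b.linearIndependent.ne_zero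
  obtain ⟨x₀, d, ψ, hψ, hcoord, hd⟩ := exists_subseq_tendsto_apply hrefl b.coord hx
  set y : ℕ → X := fun k => x (ψ k) - x₀
  have hy : ∀ i, Tendsto (fun k => b.coord i (y k)) atTop (𝓝 0) := fun i => by
    simpa [y] using (hcoord i).sub_const (b.coord i x₀)
  have hysep : ∀ {t : ℕ → ℕ}, StrictMono t → ∀ i j, i ≠ j → σ ≤ ‖y (t i) - y (t j)‖ :=
    fun ht i j hij => by simpa [y] using hsep _ _ (hψ.injective.ne (ht.injective.ne hij))
  rcases (ge_of_tendsto' hd fun _ => norm_nonneg _).eq_or_lt with rfl | hd₀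
  · have : σ ≤ 0 := le_of_separated_of_tendsto_sub (hysep strictMono_id) (v := 0)
      (by simpa [y] using tendsto_zero_iff_norm_tendsto_zero.2 hd)
      fun M => ⟨M, M + 1, le_rfl, M.lt_succ_self, by simp⟩
    linarith
  obtain ⟨t, ht, u, hu, hyu⟩ := b.exists_isNormalizedBlockBasis_tendsto hy hd₀ hd
  have hweak : ∀ f : StrongDual ℝ X, Tendsto (fun m => f (x (ψ (t m)))) atTop (𝓝 (f x₀)) := by
    intro f
    have h := ((f.continuous.tendsto 0).comp hyu).add ((hasym.tendsto_apply_zero hu f).const_mul d)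
    simpa [y] using h.add_const (f x₀)
  have hd1 : d ≤ 1 := hopial.le_of_tendsto hweak (hd.comp ht.tendsto_atTop) fun m => hx _
  have hσ : σ ≤ d * lam := le_of_separated_of_tendsto_sub (hysep ht) hyu fun M => by
    obtain ⟨i, j, hi, hij, hle⟩ := hasym.exists_norm_sub_le hu M
    refine ⟨i, j, hi, hij, ?_⟩
    rw [← smul_sub, norm_smul, Real.norm_of_nonneg hd₀.le]
    exact mul_le_mul_of_nonneg_left hle hd₀.le
  nlinarith

end

/-- **Theorem 4.2.** A reflexive Banach space with the non-strict Opial property and a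
`λ`-asymptotic `c₀` Schauder basis satisfies `K(X) ≤ λ`. -/
theorem kottman_le_of_asymptotic_c0_opial (X : Type*) [NormedAddCommGroup X]
    [NormedSpace ℝ X] [CompleteSpace X]
    (hrefl : Function.Surjective (NormedSpace.inclusionInDoubleDual ℝ X))
    (hopial : NonStrictOpial X) (e : ℕ → X) (hbasis : IsSchauderBasis e)
    (lam : ℝ) (hasym : IsAsymptoticC0 e lam) :
    kottmanConst X ≤ lam := by
  obtain ⟨b, rfl⟩ := hbasis.exists_schauderBasis
  refine csSup_le ⟨0, le_rfl, fun _ => 0, by simp, by simp⟩ ?_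
  rintro σ ⟨-, x, hx, hsep⟩
  exact le_of_separated_of_isAsymptoticC0 hrefl hopial b hasym hx hsep
end
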